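/- arXiv:1303.4239 — 4 statements merged into one kernel-verified Lean document; each statement's English description precedes it below -/
import Mathlib

section
/- Let G be a connected semisimple algebraic group over an algebraically closed field, ρ : G̃ → G its simply connected cover, t ∈ G semisimple with lifts ρ⁻¹(t) = {t̃_1, ..., t̃_l}. Then Z_G(t) is disconnected if and only if there exists g̃ ∈ G̃ with g̃ t̃_1 g̃⁻¹ = t̃_i for some i ≠ 1. -/
/-!
STATEMENT 6: Let `G` be a connected semisimple algebraic group over an algebraically
closed field, `ρ : G̃ → G` its simply connected cover (a central isogeny), `t ∈ G`
semisimple with a fixed lift `t̃₁` of `t`.  Then `Z_G(t)` is disconnected if and only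
if some `g̃ ∈ G̃` conjugates `t̃₁` to another lift `t̃ᵢ ≠ t̃₁` of `t`.

Formalization: `ρ` is a surjective homomorphism with central kernel.  As supplied by
the context, `Z_G(t)° = ρ(Z_{G̃}(t̃₁))` (centralizers of semisimple elements of the
simply connected group are connected), so "`Z_G(t)` is disconnected" is rendered as
`Z_G(t) ≠ ρ(Z_{G̃}(t̃₁))`.  "`g̃ t̃₁ g̃⁻¹ = t̃ᵢ` for some `i ≠ 1`" is rendered as:
the conjugate of `t̃₁` by `g̃` is a lift of `t` different from `t̃₁`.
-/

theorem centralizer_disconnected_iff_conjugate_lift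
    {Gt G : Type*} [Group Gt] [Group G] (ρ : Gt →* G)
    (hsurj : Function.Surjective ρ) (hker : ρ.ker ≤ Subgroup.center Gt)
    (t : G) (t1 : Gt) (hlift : ρ t1 = t) :
    Subgroup.centralizer {t} ≠ (Subgroup.centralizer {t1}).map ρ ↔
      ∃ g : Gt, ρ (g * t1 * g⁻¹) = t ∧ g * t1 * g⁻¹ ≠ t1 := by
  have hmem : ∀ x : Gt, x ∈ Subgroup.centralizer {t1} ↔ x * t1 = t1 * x := by
    intro x
    rw [Subgroup.mem_centralizer_iff]
    constructor
    · intro h; exact (h t1 rfl).symm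
    · intro h m hm
      rw [Set.mem_singleton_iff] at hm; subst hm; exact h.symm
  have hmemG : ∀ x : G, x ∈ Subgroup.centralizer {t} ↔ x * t = t * x := by
    intro x
    rw [Subgroup.mem_centralizer_iff]
    constructor
    · intro h; exact (h t rfl).symm
    · intro h m hm
      rw [Set.mem_singleton_iff] at hm; subst hm; exact h.symm
  have hsub : (Subgroup.centralizer {t1}).map ρ ≤ Subgroup.centralizer {t} := by
    intro x hx
    rw [Subgroup.mem_map] at hx
    obtain ⟨y, hy, rfl⟩ := hx
    rw [hmem] at hy
    rw [hmemG, ← hlift, ← map_mul, hy, map_mul]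
  constructor
  · intro hne
    have hx : ∃ x, x ∈ Subgroup.centralizer {t} ∧
        x ∉ (Subgroup.centralizer {t1}).map ρ := by
      by_contra h
      push_neg at h
      exact hne (le_antisymm (fun x hx => h x hx) hsub)
    obtain ⟨x, hx, hnx⟩ := hx
    obtain ⟨g, rfl⟩ := hsurj x
    have hcomm : ρ g * t = t * ρ g := (hmemG _).mp hx
    refine ⟨g, ?_, ?_⟩
    · rw [map_mul, map_mul, map_inv, hlift, hcomm, mul_assoc, mul_inv_cancel, mul_one]
    · intro hgt
      apply hnx
      rw [Subgroup.mem_map]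
      refine ⟨g, ?_, rfl⟩
      rw [hmem]
      have : g * t1 * g⁻¹ * g = t1 * g := by rw [hgt]
      rwa [inv_mul_cancel_right] at this
  · rintro ⟨g, hρ, hne⟩ heq
    have hgmem : ρ g ∈ (Subgroup.centralizer {t1}).map ρ := by
      rw [← heq, hmemG]
      rw [map_mul, map_mul, map_inv, hlift] at hρ
      calc ρ g * t = ρ g * t * (ρ g)⁻¹ * ρ g := by group
        _ = t * ρ g := by rw [hρ]
    rw [Subgroup.mem_map] at hgmem
    obtain ⟨h, hh, hgh⟩ := hgmem
    have hk : h⁻¹ * g ∈ ρ.ker := by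
      rw [MonoidHom.mem_ker, map_mul, map_inv, hgh, inv_mul_cancel]
    have hz := Subgroup.mem_center_iff.mp (hker hk)
    rw [hmem] at hh
    apply hne
    have hgt : g * t1 = t1 * g := by
      calc g * t1 = h * ((h⁻¹ * g) * t1) := by group
        _ = h * (t1 * (h⁻¹ * g)) := by rw [hz t1]
        _ = (h * t1) * (h⁻¹ * g) := by group
        _ = (t1 * h) * (h⁻¹ * g) := by rw [hh]
        _ = t1 * g := by group
    rw [hgt, mul_inv_cancel_right]
end

section
/- In the group PGL_2(k) (equivalently PSL_2(k)) over an algebraically closed field k of characteristic ≠ 2, the number of conjugacy classes of centralizers of semisimple elements is 3, while the number of conjugacy classes of stabilizers of torus elements in the Weyl group S_2 is 2. -/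
/-!
STATEMENT 7: In `PGL₂(k) = GL₂(k)/k^×` over an algebraically closed field `k` of
characteristic `≠ 2`, the number of conjugacy classes of centralizers of semisimple
elements is `3`, while the number of conjugacy classes of stabilizers of torus
elements in the Weyl group `S₂` is `2`.

A semisimple element of `PGL₂(k)` is the image of a diagonalizable matrix.  The Weyl
group `S₂ = Perm (Fin 2)` acts on the torus `kˣ` (the diagonal torus of `PGL₂` is
`{diag(a,1)} ≅ kˣ`) with the nontrivial element acting by `a ↦ a⁻¹`; this action is
realized through the sign homomorphism `Perm (Fin 2) →* ℤˣ` and `u • a = a ^ (u : ℤ)`.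
-/

open Pointwise

variable {k : Type*} [Field k]

/-- The diagonal matrix `diag d` as an element of `GL₂(k)`. -/
def diagGL (d : Fin 2 → kˣ) : GL (Fin 2) k :=
  ⟨Matrix.diagonal fun i => (d i : k), Matrix.diagonal fun i => ((d i)⁻¹ : k),
    by rw [Matrix.diagonal_mul_diagonal]; simp,
    by rw [Matrix.diagonal_mul_diagonal]; simp⟩

/-- An element of `PGL₂(k)` is semisimple iff it is the image of a diagonalizable
matrix. -/
def IsSemisimplePGL2 (g : GL (Fin 2) k ⧸ Subgroup.center (GL (Fin 2) k)) : Prop :=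
  ∃ (P : GL (Fin 2) k) (d : Fin 2 → kˣ),
    QuotientGroup.mk (P * diagGL d * P⁻¹) = g

/-- `ℤˣ` acts on `kˣ` by `u • a = a ^ (u : ℤ)`. -/
instance zUnitsAction : MulAction ℤˣ (kˣ) where
  smul u a := a ^ (u : ℤ)
  one_smul a := by show a ^ ((1 : ℤˣ) : ℤ) = a; simp
  mul_smul u v a := by
    show a ^ ((u * v : ℤˣ) : ℤ) = (a ^ (v : ℤ)) ^ (u : ℤ)
    rw [← zpow_mul, Units.val_mul, mul_comm]

/-- The Weyl group `S₂` acts on the torus `kˣ` of `PGL₂` through the sign character: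
the transposition acts by `a ↦ a⁻¹`. -/
instance weylS2Action : MulAction (Equiv.Perm (Fin 2)) (kˣ) :=
  MulAction.compHom (kˣ) (Equiv.Perm.sign (α := Fin 2))


/-!
Every semisimple element of `PGL₂(k)` is conjugate to `t r = diag(r, 1)`, and conjugating an
element conjugates its centralizer, so only the centralizers of the `t r` matter. Reading
`t r · X = c · X · t r` entrywise shows that for `r² ≠ 1` this centralizer is the diagonal torus,
which is abelian. For `r = 1` it is the whole group, and for `r = -1` it contains the torus and
the antidiagonal matrix (which do not commute) but not `[[1, 1], [0, 1]]`, since `-1 ≠ 1`.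
Commutativity and being the whole group are conjugation invariants, so there are exactly three
classes. In `S₂` the transposition inverts the torus element, so its stabilizer is `S₂` or
trivial according as `a² = 1` or not; both occur because `k` is infinite.
-/

section OrbitQuotient

variable {G α : Type*} [Group G] [MulAction G α]

theorem orbitRel_mk_smul (g : G) (a : α) :
    Quotient.mk (MulAction.orbitRel G α) (g • a) = Quotient.mk _ a :=
  Quotient.sound ⟨g, rfl⟩

theorem orbitRel_mk_ne_of_smul_invariant (p : α → Prop) (hp : ∀ (g : G) a, p a → p (g • a))
    {a b : α} (ha : p a) (hb : ¬ p b) :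
    Quotient.mk (MulAction.orbitRel G α) a ≠ Quotient.mk _ b := by
  intro hab
  obtain ⟨g, rfl⟩ := MulAction.orbitRel_apply.mp (Quotient.exact hab.symm)
  exact hb (hp g a ha)

end OrbitQuotient

section ConjugateSubgroups

variable {G : Type*} [Group G]

theorem Subgroup.centralizer_singleton_conj (h g : G) :
    centralizer {h * g * h⁻¹} = ConjAct.toConjAct h • centralizer {g} := by
  ext x
  rw [mem_pointwise_smul_iff_inv_smul_mem, ← ConjAct.toConjAct_inv, ConjAct.toConjAct_smul,
    mem_centralizer_singleton_iff, mem_centralizer_singleton_iff, inv_inv,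
    ← commute_iff_eq, ← commute_iff_eq, ← Commute.conj_iff h⁻¹]
  simp [mul_assoc]

theorem Subgroup.conjAct_smul_top (g : ConjAct G) : g • (⊤ : Subgroup G) = ⊤ :=
  eq_top_iff.2 fun _ _ => mem_pointwise_smul_iff_inv_smul_mem.2 trivial

theorem Subgroup.isMulCommutative_conjAct_smul (g : ConjAct G) (H : Subgroup G)
    [IsMulCommutative H] : IsMulCommutative (g • H : Subgroup G) :=
  map_isMulCommutative H (MulDistribMulAction.toMonoidEnd _ _ g)

end ConjugateSubgroups

def conjClassesOfCentralizers (G : Type*) [Group G] (S : Set G) :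
    Set (MulAction.orbitRel.Quotient (ConjAct G) (Subgroup G)) :=
  {C | ∃ g ∈ S, C = Quotient.mk _ (Subgroup.centralizer {g})}

def conjClassesOfStabilizers (W α : Type*) [Group W] [MulAction W α] :
    Set (MulAction.orbitRel.Quotient (ConjAct W) (Subgroup W)) :=
  {D | ∃ a : α, D = Quotient.mk _ (MulAction.stabilizer W a)}

theorem Units.mul_self_eq_one_iff {R : Type*} [Ring R] [NoZeroDivisors R] {a : Rˣ} :
    a * a = 1 ↔ a = 1 ∨ a = -1 := by
  simp only [Units.ext_iff, Units.val_mul, Units.val_one, Units.val_neg, _root_.mul_self_eq_one_iff]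

theorem Matrix.ProjGenLinGroup.commute_mk_iff {n R : Type*} [Fintype n] [DecidableEq n]
    [CommRing R] {X Y : GL n R} :
    Commute (mk X) (mk Y) ↔ ∃ u : Rˣ, X * Y * GeneralLinearGroup.scalar n u = Y * X := by
  rw [commute_iff_eq, ← map_mul, ← map_mul, mk_eq_mk_iff]

theorem exists_units_mul_self_ne_one (K : Type*) [Field K] [Infinite K] :
    ∃ a : Kˣ, a * a ≠ 1 := by
  classical
  obtain ⟨x, hx⟩ := Infinite.exists_notMem_finset ({0, 1, -1} : Finset K)
  simp only [Finset.mem_insert, Finset.mem_singleton, not_or] at hx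
  refine ⟨Units.mk0 x hx.1, fun h => ?_⟩
  rcases Units.mul_self_eq_one_iff.1 h with h | h
  · exact hx.2.1 congr(($h : K))
  · exact hx.2.2 congr(($h : K))

namespace PGL2

open Matrix ProjGenLinGroup
open scoped MatrixGroups

theorem val_diagGL (d : Fin 2 → kˣ) :
    (diagGL d : Matrix (Fin 2) (Fin 2) k) = diagonal fun i => (d i : k) := rfl

theorem diagGL_mul (d e : Fin 2 → kˣ) : diagGL d * diagGL e = diagGL (d * e) :=
  Units.ext <| by simp [val_diagGL]

theorem diagGL_one : diagGL (1 : Fin 2 → kˣ) = 1 :=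
  Units.ext <| by simp [val_diagGL]

theorem exists_diagGL_eq {X : GL (Fin 2) k} (h01 : (X : Matrix (Fin 2) (Fin 2) k) 0 1 = 0)
    (h10 : (X : Matrix (Fin 2) (Fin 2) k) 1 0 = 0) : ∃ d, diagGL d = X := by
  have hdet := GeneralLinearGroup.det_ne_zero X
  rw [det_fin_two, h01, zero_mul, sub_zero] at hdet
  refine ⟨![Units.mk0 _ (left_ne_zero_of_mul hdet), Units.mk0 _ (right_ne_zero_of_mul hdet)],
    Units.ext ?_⟩
  ext i j
  fin_cases i <;> fin_cases j <;> simp [val_diagGL, h01, h10]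

theorem offDiag_eq_zero_of_diagGL_mul_scalar_eq {r u : kˣ} (hr : r * r ≠ 1) {X : GL (Fin 2) k}
    (hX : diagGL ![r, 1] * X * GeneralLinearGroup.scalar (Fin 2) u = X * diagGL ![r, 1]) :
    (X : Matrix (Fin 2) (Fin 2) k) 0 1 = 0 ∧ (X : Matrix (Fin 2) (Fin 2) k) 1 0 = 0 := by
  set M : Matrix (Fin 2) (Fin 2) k := X.val
  have hE (i j : Fin 2) := congr(($hX : Matrix (Fin 2) (Fin 2) k) i j)
  have e00 : M 0 0 * r * u = M 0 0 * r := by simpa [val_diagGL, mul_comm] using hE 0 0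
  have e01 : r * M 0 1 * u = M 0 1 := by simpa [val_diagGL] using hE 0 1
  have e10 : M 1 0 * u = M 1 0 * r := by simpa [val_diagGL] using hE 1 0
  have e11 : M 1 1 * u = M 1 1 := by simpa [val_diagGL] using hE 1 1
  have hr' : (r : k) * r ≠ 1 := fun h => hr (Units.ext (by simpa using h))
  have hr1 : (r : k) ≠ 1 := fun h => hr' (by rw [h, one_mul])
  by_cases hu : (u : k) = 1
  · rw [hu, mul_one] at e01
    rw [hu] at e10
    exact ⟨by_contra fun h => hr1 ((mul_eq_right₀ h).1 e01),
      by_contra fun h => hr1 ((mul_right_inj' h).1 e10).symm⟩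
  · -- otherwise the diagonal of `X` vanishes, and the off-diagonal equations force `u = r = u⁻¹`
    have h00 : M 0 0 = 0 :=
      by_contra fun h => hu ((mul_eq_left₀ (mul_ne_zero h r.ne_zero)).1 e00)
    have h11 : M 1 1 = 0 := by_contra fun h => hu ((mul_eq_left₀ h).1 e11)
    have hdet : M.det ≠ 0 := GeneralLinearGroup.det_ne_zero X
    rw [det_fin_two, h00, h11, zero_mul, zero_sub, neg_ne_zero] at hdet
    have hur : (u : k) = r := (mul_right_inj' (right_ne_zero_of_mul hdet)).1 e10
    rw [hur, mul_right_comm] at e01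
    exact absurd ((mul_eq_right₀ (left_ne_zero_of_mul hdet)).1 e01) hr'

def diagPGL (a : kˣ) : PGL(2, k) := mk (diagGL ![a, 1])

theorem mk_diagGL (d : Fin 2 → kˣ) : mk (diagGL d) = diagPGL (d 0 / d 1) := by
  refine (mk_eq_mk_iff.2 ⟨d 1, Units.ext ?_⟩).symm
  ext i j
  fin_cases i <;> fin_cases j <;> simp [val_diagGL]

theorem diagPGL_one : diagPGL (1 : kˣ) = 1 := by
  simpa [diagGL_one] using (mk_diagGL (k := k) 1).symm

theorem commute_mk_diagGL (d e : Fin 2 → kˣ) : Commute (mk (diagGL d)) (mk (diagGL e)) := by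
  rw [commute_iff_eq, ← map_mul, ← map_mul, diagGL_mul, diagGL_mul, mul_comm]

theorem mem_centralizer_diagPGL_iff {r : kˣ} (hr : r * r ≠ 1) {x : PGL(2, k)} :
    x ∈ Subgroup.centralizer {diagPGL r} ↔ ∃ d, mk (diagGL d) = x := by
  rw [Subgroup.mem_centralizer_singleton_iff, ← commute_iff_eq]
  constructor
  · induction x using ProjGenLinGroup.induction_on with | mk X => ?_
    intro hX
    obtain ⟨u, hu⟩ := commute_mk_iff.1 hX.symm
    obtain ⟨h01, h10⟩ := offDiag_eq_zero_of_diagGL_mul_scalar_eq hr hu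
    obtain ⟨d, rfl⟩ := exists_diagGL_eq h01 h10
    exact ⟨d, rfl⟩
  · rintro ⟨d, rfl⟩
    exact commute_mk_diagGL _ _

theorem centralizer_diagPGL_eq {r s : kˣ} (hr : r * r ≠ 1) (hs : s * s ≠ 1) :
    Subgroup.centralizer {diagPGL r} = Subgroup.centralizer {diagPGL s} := by
  ext x
  rw [mem_centralizer_diagPGL_iff hr, mem_centralizer_diagPGL_iff hs]

theorem isMulCommutative_centralizer_diagPGL {r : kˣ} (hr : r * r ≠ 1) :
    IsMulCommutative (Subgroup.centralizer {diagPGL r}) := by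
  refine .of_setLike_mul_comm fun x hx y hy => ?_
  obtain ⟨d, rfl⟩ := (mem_centralizer_diagPGL_iff hr).1 hx
  obtain ⟨e, rfl⟩ := (mem_centralizer_diagPGL_iff hr).1 hy
  exact commute_mk_diagGL d e

def antidiagPGL : PGL(2, k) := mk (GeneralLinearGroup.mkOfDetNeZero !![0, 1; 1, 0] (by simp))

def unipotentPGL : PGL(2, k) := mk (GeneralLinearGroup.mkOfDetNeZero !![1, 1; 0, 1] (by simp))

theorem antidiagPGL_mem_centralizer_diagPGL_neg_one :
    antidiagPGL ∈ Subgroup.centralizer {diagPGL (-1 : kˣ)} := by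
  rw [Subgroup.mem_centralizer_singleton_iff, ← commute_iff_eq, antidiagPGL, diagPGL,
    commute_mk_iff]
  refine ⟨-1, Units.ext ?_⟩
  ext i j
  fin_cases i <;> fin_cases j <;> simp [val_diagGL, vecMul_diagonal]

theorem not_commute_antidiagPGL_diagPGL {a : kˣ} (ha : a * a ≠ 1) :
    ¬ Commute antidiagPGL (diagPGL a) := by
  rw [antidiagPGL, diagPGL, commute_mk_iff]
  rintro ⟨u, hu⟩
  have h01 : (u : k) = a := by
    simpa [val_diagGL, vecMul_diagonal] using congr(($hu : Matrix (Fin 2) (Fin 2) k) 0 1)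
  have h10 : (a : k) * u = 1 := by
    simpa [val_diagGL, vecMul_diagonal] using congr(($hu : Matrix (Fin 2) (Fin 2) k) 1 0)
  rw [h01] at h10
  exact ha (Units.ext (by simpa using h10))

theorem unipotentPGL_not_mem_centralizer_diagPGL_neg_one (h2 : (2 : k) ≠ 0) :
    unipotentPGL ∉ Subgroup.centralizer {diagPGL (-1 : kˣ)} := by
  rw [Subgroup.mem_centralizer_singleton_iff, ← commute_iff_eq, unipotentPGL, diagPGL,
    commute_mk_iff]
  rintro ⟨u, hu⟩
  have h01 : (u : k) = -1 := by
    simpa [val_diagGL, vecMul_diagonal] using congr(($hu : Matrix (Fin 2) (Fin 2) k) 0 1)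
  have h11 : (u : k) = 1 := by
    simpa [val_diagGL, vecMul_diagonal] using congr(($hu : Matrix (Fin 2) (Fin 2) k) 1 1)
  exact h2 (by linear_combination h01 - h11)

theorem diagPGL_mem_centralizer_diagPGL (a b : kˣ) :
    diagPGL a ∈ Subgroup.centralizer {diagPGL b} :=
  Subgroup.mem_centralizer_singleton_iff.2 (commute_mk_diagGL _ _).eq

theorem not_isMulCommutative_of_antidiagPGL_mem {a : kˣ} (ha : a * a ≠ 1) {H : Subgroup PGL(2, k)}
    (hw : antidiagPGL ∈ H) (ht : diagPGL a ∈ H) : ¬ IsMulCommutative H := fun _ =>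
  not_commute_antidiagPGL_diagPGL ha (setLike_mul_comm hw ht)

theorem isSemisimplePGL2_diagPGL (a : kˣ) : IsSemisimplePGL2 (diagPGL a) :=
  ⟨1, ![a, 1], by rw [one_mul, inv_one, mul_one]; rfl⟩

theorem conjClassesOfCentralizers_semisimple {a : kˣ} (ha : a * a ≠ 1) :
    conjClassesOfCentralizers PGL(2, k) {g | IsSemisimplePGL2 g} =
      {Quotient.mk _ ⊤, Quotient.mk _ (Subgroup.centralizer {diagPGL a}),
        Quotient.mk _ (Subgroup.centralizer {diagPGL (-1)})} := by
  have hone : Subgroup.centralizer {(1 : PGL(2, k))} = ⊤ :=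
    Subgroup.centralizer_eq_top_iff_subset.2 (by simp)
  ext C
  simp only [conjClassesOfCentralizers, Set.mem_ofPred_eq, Set.mem_insert_iff,
    Set.mem_singleton_iff]
  constructor
  · rintro ⟨_, ⟨P, d, rfl⟩, rfl⟩
    have hconj : (QuotientGroup.mk (P * diagGL d * P⁻¹) : PGL(2, k)) =
        mk P * diagPGL (d 0 / d 1) * (mk P)⁻¹ := by
      rw [← mk_diagGL, ← map_inv, ← map_mul, ← map_mul]; rfl
    rw [hconj, Subgroup.centralizer_singleton_conj, orbitRel_mk_smul]
    rcases eq_or_ne (d 0 / d 1 * (d 0 / d 1)) 1 with hr | hr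
    · rcases Units.mul_self_eq_one_iff.1 hr with h | h <;> rw [h]
      · simp [diagPGL_one, hone]
      · simp
    · rw [centralizer_diagPGL_eq hr ha]; simp
  · rintro (rfl | rfl | rfl)
    · exact ⟨_, isSemisimplePGL2_diagPGL 1, by rw [diagPGL_one, hone]⟩
    · exact ⟨_, isSemisimplePGL2_diagPGL a, rfl⟩
    · exact ⟨_, isSemisimplePGL2_diagPGL (-1), rfl⟩

theorem ncard_conjClassesOfCentralizers_semisimple (h2 : (2 : k) ≠ 0) {a : kˣ}
    (ha : a * a ≠ 1) :
    (conjClassesOfCentralizers PGL(2, k) {g | IsSemisimplePGL2 g}).ncard = 3 := by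
  have hcomm (g : ConjAct PGL(2, k)) (H : Subgroup PGL(2, k)) (hH : IsMulCommutative H) :
      IsMulCommutative (g • H : Subgroup PGL(2, k)) :=
    Subgroup.isMulCommutative_conjAct_smul g H
  have hN := antidiagPGL_mem_centralizer_diagPGL_neg_one (k := k)
  rw [conjClassesOfCentralizers_semisimple ha, Set.ncard_eq_three]
  refine ⟨_, _, _, ?_, ?_, ?_, rfl⟩
  · exact (orbitRel_mk_ne_of_smul_invariant _ hcomm (isMulCommutative_centralizer_diagPGL ha)
      (not_isMulCommutative_of_antidiagPGL_mem ha (Subgroup.mem_top _) (Subgroup.mem_top _))).symm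
  · refine orbitRel_mk_ne_of_smul_invariant (· = ⊤)
      (fun g H h => h ▸ Subgroup.conjAct_smul_top g) rfl fun h => ?_
    exact unipotentPGL_not_mem_centralizer_diagPGL_neg_one h2 (h ▸ Subgroup.mem_top _)
  · exact orbitRel_mk_ne_of_smul_invariant _ hcomm (isMulCommutative_centralizer_diagPGL ha)
      (not_isMulCommutative_of_antidiagPGL_mem ha hN (diagPGL_mem_centralizer_diagPGL a (-1)))

end PGL2

theorem Equiv.Perm.fin_two_eq_one_or_eq_swap (σ : Equiv.Perm (Fin 2)) :
    σ = 1 ∨ σ = Equiv.swap 0 1 := by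
  revert σ; decide

theorem swap_smul_eq_inv (a : kˣ) : Equiv.swap (0 : Fin 2) 1 • a = a⁻¹ := by
  change a ^ ((Equiv.Perm.sign (Equiv.swap (0 : Fin 2) 1) : ℤˣ) : ℤ) = a⁻¹
  rw [Equiv.Perm.sign_swap (by decide)]
  simp

theorem weyl_smul_eq_self_iff {σ : Equiv.Perm (Fin 2)} {a : kˣ} :
    σ • a = a ↔ σ = 1 ∨ a * a = 1 := by
  rcases σ.fin_two_eq_one_or_eq_swap with rfl | rfl
  · simp
  · rw [swap_smul_eq_inv, inv_eq_iff_mul_eq_one]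
    simp [show Equiv.swap (0 : Fin 2) 1 ≠ 1 by decide]

theorem stabilizer_weyl_eq_top {a : kˣ} (ha : a * a = 1) :
    MulAction.stabilizer (Equiv.Perm (Fin 2)) a = ⊤ := by
  ext σ
  simp [weyl_smul_eq_self_iff, ha]

theorem stabilizer_weyl_eq_bot {a : kˣ} (ha : a * a ≠ 1) :
    MulAction.stabilizer (Equiv.Perm (Fin 2)) a = ⊥ := by
  ext σ
  simp [weyl_smul_eq_self_iff, ha]

theorem conjClassesOfStabilizers_weyl {a : kˣ} (ha : a * a ≠ 1) :
    conjClassesOfStabilizers (Equiv.Perm (Fin 2)) kˣ = {Quotient.mk _ ⊤, Quotient.mk _ ⊥} := by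
  ext D
  simp only [conjClassesOfStabilizers, Set.mem_ofPred_eq, Set.mem_insert_iff,
    Set.mem_singleton_iff]
  constructor
  · rintro ⟨b, rfl⟩
    rcases eq_or_ne (b * b) 1 with hb | hb
    · exact .inl (by rw [stabilizer_weyl_eq_top hb])
    · exact .inr (by rw [stabilizer_weyl_eq_bot hb])
  · rintro (rfl | rfl)
    · exact ⟨1, by rw [stabilizer_weyl_eq_top (mul_one 1)]⟩
    · exact ⟨a, by rw [stabilizer_weyl_eq_bot ha]⟩

theorem ncard_conjClassesOfStabilizers_weyl {a : kˣ} (ha : a * a ≠ 1) :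
    (conjClassesOfStabilizers (Equiv.Perm (Fin 2)) kˣ).ncard = 2 := by
  rw [conjClassesOfStabilizers_weyl ha]
  exact Set.ncard_pair (orbitRel_mk_ne_of_smul_invariant (· = ⊤)
    (fun g H h => h ▸ Subgroup.conjAct_smul_top g) rfl bot_ne_top)

theorem pgl2_centralizer_classes_three_weyl_stabilizer_classes_two
    [IsAlgClosed k] (hchar : (2 : k) ≠ 0) :
    Nat.card {C : Quotient (MulAction.orbitRel
        (ConjAct (GL (Fin 2) k ⧸ Subgroup.center (GL (Fin 2) k)))
        (Subgroup (GL (Fin 2) k ⧸ Subgroup.center (GL (Fin 2) k)))) //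
      ∃ g : GL (Fin 2) k ⧸ Subgroup.center (GL (Fin 2) k), IsSemisimplePGL2 g ∧
        C = Quotient.mk (MulAction.orbitRel
            (ConjAct (GL (Fin 2) k ⧸ Subgroup.center (GL (Fin 2) k)))
            (Subgroup (GL (Fin 2) k ⧸ Subgroup.center (GL (Fin 2) k))))
          (Subgroup.centralizer {g})} = 3 ∧
    Nat.card {D : Quotient (MulAction.orbitRel (ConjAct (Equiv.Perm (Fin 2)))
        (Subgroup (Equiv.Perm (Fin 2)))) //
      ∃ a : kˣ, D = Quotient.mk (MulAction.orbitRel (ConjAct (Equiv.Perm (Fin 2)))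
          (Subgroup (Equiv.Perm (Fin 2))))
        (MulAction.stabilizer (Equiv.Perm (Fin 2)) a)} = 2 := by
  obtain ⟨a, ha⟩ := exists_units_mul_self_ne_one k
  -- the subtypes counted here are, by definition, the coercions of the two sets of classes
  exact ⟨PGL2.ncard_conjClassesOfCentralizers_semisimple hchar ha,
    ncard_conjClassesOfStabilizers_weyl ha⟩
end

section
/- Let n be even, W(D_n) = (ℤ/2)^{n−1} ⋊ S_n (even sign changes), and let t = (t_1,...,t_n) ∈ (ℝ/ℤ)^n with t_1 = ... = t_{n−1} = −t_n and t_i ∉ {0, 1/2, 1/4, 3/4} for all i (in particular 2t_i ≠ 0). Then the stabilizer W_t has order n! but is not conjugate in W(D_n) to the subgroup S_n of pure permutations. -/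
/-!
STATEMENT 12: Let `n` be even, `W(D_n) = (ℤ/2)^{n−1} ⋊ S_n` (even sign changes), and
`t = (t_1,…,t_n) ∈ (ℝ/ℤ)^n` with `t_1 = … = t_{n−1} = −t_n` and
`t_i ∉ {0, 1/2, 1/4, 3/4}` for all `i`.  Then the stabilizer `W_t` has order `n!` but
is not conjugate in `W(D_n)` to the subgroup `S_n` of pure permutations.
-/

open Pointwise

/-- The sign group `(ℤ/2)^n`, realized multiplicatively as `Fin n → ℤˣ`. -/
abbrev Signs (n : ℕ) := Fin n → ℤˣ

/-- A permutation of `Fin n` acts on `Signs n` by permuting the coordinates. -/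
def permAutSigns {n : ℕ} (σ : Equiv.Perm (Fin n)) : MulAut (Signs n) where
  toFun v := v ∘ σ.symm
  invFun v := v ∘ σ
  left_inv v := by funext i; simp
  right_inv v := by funext i; simp
  map_mul' v w := rfl

/-- The action of `S_n` on `(ℤ/2)^n` permuting coordinates, as a homomorphism. -/
def permHom (n : ℕ) : Equiv.Perm (Fin n) →* MulAut (Signs n) where
  toFun := permAutSigns
  map_one' := MulEquiv.ext fun v => rfl
  map_mul' σ τ := MulEquiv.ext fun v => rfl

/-- The hyperoctahedral group `W(B_n) = (ℤ/2)^n ⋊ S_n`. -/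
abbrev WB (n : ℕ) := SemidirectProduct (Signs n) (Equiv.Perm (Fin n)) (permHom n)

/-- `W(B_n)` acts on `M^n` for any additive group `M` (e.g. the torus `(ℝ/ℤ)^n` or the
Cartan subalgebra `k^n`) by permuting the coordinates and negating some of them. -/
instance WBAction {n : ℕ} {M : Type*} [AddCommGroup M] : MulAction (WB n) (Fin n → M) where
  smul w t := fun i => ((w.left i : ℤ)) • t (w.right⁻¹ i)
  one_smul t := by
    funext i
    show (((1 : WB n).left i : ℤ)) • t ((1 : WB n).right⁻¹ i) = t i
    simp
  mul_smul w w' t := by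
    funext i
    show (((w * w').left i : ℤ)) • t ((w * w').right⁻¹ i)
      = ((w.left i : ℤ)) • ((w'.left (w.right⁻¹ i) : ℤ)) • t (w'.right⁻¹ (w.right⁻¹ i))
    rw [SemidirectProduct.mul_left, SemidirectProduct.mul_right]
    simp [permHom, permAutSigns, mul_inv_rev, Units.val_mul, mul_smul, Equiv.Perm.inv_def]

/-- The product-of-signs character of `W(B_n)`. -/
def signProd (n : ℕ) : WB n →* ℤˣ where
  toFun w := ∏ i, w.left i
  map_one' := by simp
  map_mul' w w' := by
    show (∏ i, (w * w').left i) = _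
    rw [SemidirectProduct.mul_left]
    show (∏ i, w.left i * w'.left (w.right.symm i)) = _
    rw [Finset.prod_mul_distrib]
    congr 1
    exact Equiv.prod_comp w.right.symm w'.left

/-- The Weyl group `W(D_n) = (ℤ/2)^{n-1} ⋊ S_n` of even sign changes. -/
abbrev WD (n : ℕ) : Subgroup (WB n) := (signProd n).ker

/-- The subgroup `S_n ⊂ W(D_n)` of pure permutations (trivial sign change part). -/
def SnInWD (n : ℕ) : Subgroup (WD n) :=
  (SemidirectProduct.inr : Equiv.Perm (Fin n) →* WB n).range.subgroupOf (WD n)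

/-! With `c` the constant vector `θ` and `d` the sign change of the last coordinate,
`t = d • c`. Since `2θ ≠ 0`, the stabilizer of `c` in `W(B_n)` is exactly `S_n`, so
`W_t = d S_n d⁻¹`; it lies in the normal subgroup `W(D_n)` and has order `n!`. If
`g S_n g⁻¹ = W_t` with `g ∈ W(D_n)`, then `S_n` fixes `g⁻¹ d • c`, so this vector is constant,
which forces the sign part of `g⁻¹ d` to be constant; for even `n` its sign product is then `1`,
whereas `d` is an odd sign change. -/

open SemidirectProduct MulAction

section AddCircle

variable {𝕜 : Type*} [Field 𝕜] [LinearOrder 𝕜] [IsStrictOrderedRing 𝕜] [FloorRing 𝕜]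
  {p : 𝕜} [Fact (0 < p)]

theorem AddCircle.eq_zero_or_eq_half_of_two_nsmul_eq_zero {θ : AddCircle p} (h : 2 • θ = 0) :
    θ = 0 ∨ θ = ((p / 2 : 𝕜) : AddCircle p) := by
  obtain ⟨m, hm, rfl⟩ := (AddCircle.nsmul_eq_zero_iff two_pos).mp h
  interval_cases m
  · exact .inl (by simp)
  · exact .inr (by push_cast; ring_nf)

theorem AddCircle.ne_neg_self {θ : AddCircle p} (h0 : θ ≠ 0)
    (hhalf : θ ≠ ((p / 2 : 𝕜) : AddCircle p)) : θ ≠ -θ := by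
  intro h
  rw [eq_neg_iff_add_eq_zero, ← two_nsmul] at h
  exact (AddCircle.eq_zero_or_eq_half_of_two_nsmul_eq_zero h).elim h0 hhalf

end AddCircle

theorem zsmul_units_injective {M : Type*} [AddCommGroup M] {θ : M} (hθ : θ ≠ -θ) :
    Function.Injective fun ε : ℤˣ => (ε : ℤ) • θ := by
  intro ε ε' h
  rcases Int.units_eq_one_or ε with rfl | rfl <;>
    rcases Int.units_eq_one_or ε' with rfl | rfl <;> simp_all [eq_comm]

theorem MulAction.le_stabilizer_inv_smul_of_smul_eq_stabilizer {G α : Type*} [Group G]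
    [MulAction G α] {H : Subgroup G} {g : ConjAct G} {a : α} (h : g • H = stabilizer G a) :
    H ≤ stabilizer G ((ConjAct.ofConjAct g)⁻¹ • a) := by
  intro x hx
  have hgx : g • x ∈ stabilizer G a := h ▸ Subgroup.smul_mem_pointwise_smul _ _ _ hx
  rw [mem_stabilizer_iff, ConjAct.smul_def, mul_smul, mul_smul, ← eq_inv_smul_iff] at hgx
  rw [mem_stabilizer_iff, hgx]

namespace WB

variable {n : ℕ} {M : Type*} [AddCommGroup M]

theorem smul_apply (u : WB n) (x : Fin n → M) (i : Fin n) :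
    (u • x) i = (u.left i : ℤ) • x (u.right⁻¹ i) := rfl

theorem inr_smul_apply (ρ : Equiv.Perm (Fin n)) (x : Fin n → M) (i : Fin n) :
    ((inr ρ : WB n) • x) i = x (ρ⁻¹ i) := by
  simp [smul_apply]

theorem mem_range_inr_iff {u : WB n} :
    u ∈ (inr : Equiv.Perm (Fin n) →* WB n).range ↔ u.left = 1 :=
  ⟨by rintro ⟨ρ, rfl⟩; rfl, fun h => ⟨u.right, by ext <;> simp [h]⟩⟩

theorem eq_of_range_inr_le_stabilizer {x : Fin n → M}
    (hx : (inr : Equiv.Perm (Fin n) →* WB n).range ≤ stabilizer (WB n) x) (i j : Fin n) :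
    x i = x j := by
  simpa [inr_smul_apply] using congrFun (hx ⟨Equiv.swap i j, rfl⟩) j

theorem stabilizer_const {θ : M} (hθ : θ ≠ -θ) :
    stabilizer (WB n) (fun _ : Fin n => θ) = (inr : Equiv.Perm (Fin n) →* WB n).range := by
  ext u
  simp only [mem_stabilizer_iff, mem_range_inr_iff, funext_iff, smul_apply, Pi.one_apply]
  exact forall_congr' fun i => (zsmul_units_injective hθ).eq_iff' (one_zsmul θ)

theorem range_inr_le_WD : (inr : Equiv.Perm (Fin n) →* WB n).range ≤ WD n := by
  rintro _ ⟨ρ, rfl⟩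
  show ∏ i, (inr ρ : WB n).left i = 1
  simp

def signFlip (k : Fin n) : WB n := inl (Pi.mulSingle k (-1))

theorem signFlip_smul_const (k : Fin n) (θ : M) :
    signFlip k • (fun _ => θ) = fun i => if i = k then -θ else θ := by
  funext i
  by_cases h : i = k <;> simp [signFlip, smul_apply, h]

theorem signProd_signFlip (k : Fin n) : signProd n (signFlip k) = -1 := by
  show ∏ i, Pi.mulSingle k (-1 : ℤˣ) i = -1
  simp

theorem signProd_eq_one_of_range_inr_le_stabilizer (hn : Even n) {θ : M} (hθ : θ ≠ -θ)
    (u : WB n)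
    (hu : (inr : Equiv.Perm (Fin n) →* WB n).range ≤ stabilizer (WB n) (u • fun _ : Fin n => θ)) :
    signProd n u = 1 := by
  obtain _ | m := n
  · rfl
  have hconst (i : Fin (m + 1)) : u.left i = u.left 0 :=
    zsmul_units_injective hθ (eq_of_range_inr_le_stabilizer hu i 0)
  show ∏ i, u.left i = 1
  rw [Fintype.prod_congr _ _ hconst, Finset.prod_const, Finset.card_univ, Fintype.card_fin,
    Int.units_pow_eq_pow_mod_two, Nat.even_iff.mp hn, pow_zero]

theorem stabilizer_signFlip_smul_const_le_WD (k : Fin n) {θ : M} (hθ : θ ≠ -θ) :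
    stabilizer (WB n) (signFlip k • fun _ : Fin n => θ) ≤ WD n := by
  rw [stabilizer_smul_eq_stabilizer_map_conj, stabilizer_const hθ]
  rintro _ ⟨ρ, hρ, rfl⟩
  exact (signProd n).normal_ker.conj_mem _ (range_inr_le_WD hρ) _

theorem card_stabilizer_signFlip_smul_const (k : Fin n) {θ : M} (hθ : θ ≠ -θ) :
    Nat.card (stabilizer (WD n) (signFlip k • fun _ : Fin n => θ)) = n.factorial :=
  calc Nat.card (stabilizer (WD n) (signFlip k • fun _ : Fin n => θ))
      = Nat.card (stabilizer (WB n) (signFlip k • fun _ : Fin n => θ)) :=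
        Nat.card_congr
          (Subgroup.subgroupOfEquivOfLe (stabilizer_signFlip_smul_const_le_WD k hθ)).toEquiv
    _ = Nat.card (stabilizer (WB n) fun _ : Fin n => θ) :=
        Nat.card_congr (stabilizerEquivStabilizer rfl).symm.toEquiv
    _ = Nat.card (Equiv.Perm (Fin n)) := by
        rw [stabilizer_const hθ]
        exact Nat.card_congr (MonoidHom.ofInjective inr_injective).symm.toEquiv
    _ = n.factorial := by rw [Nat.card_perm, Nat.card_eq_fintype_card, Fintype.card_fin]

end WB

open WB

theorem stabilizer_order_and_nonconjugacy_Dn_general (n : ℕ) (hn : 0 < n) (hne : Even n)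
    (θ : AddCircle (1 : ℝ))
    (h0 : θ ≠ 0) (hhalf : θ ≠ ((1 / 2 : ℝ) : AddCircle (1 : ℝ)))
    (t : Fin n → AddCircle (1 : ℝ))
    (ht : t = fun i : Fin n => if (i : ℕ) = n - 1 then -θ else θ) :
    Nat.card (MulAction.stabilizer (WD n) t) = n.factorial ∧
    ∀ g : ConjAct (WD n), g • SnInWD n ≠ MulAction.stabilizer (WD n) t := by
  have hθ : θ ≠ -θ := AddCircle.ne_neg_self h0 hhalf
  let k : Fin n := ⟨n - 1, Nat.sub_lt hn one_pos⟩
  obtain rfl : t = signFlip k • fun _ => θ := by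
    rw [ht, signFlip_smul_const]
    simp [k, Fin.ext_iff]
  refine ⟨card_stabilizer_signFlip_smul_const k hθ, fun g hg => ?_⟩
  set w : WD n := ConjAct.ofConjAct g
  have hfix := le_stabilizer_inv_smul_of_smul_eq_stabilizer hg
  have heven : signProd n ((w : WB n)⁻¹ * signFlip k) = 1 := by
    refine signProd_eq_one_of_range_inr_le_stabilizer hne hθ _ ?_
    rintro _ ⟨ρ, rfl⟩
    have hρ : (⟨inr ρ, range_inr_le_WD ⟨ρ, rfl⟩⟩ : WD n) ∈ SnInWD n :=
      Subgroup.mem_subgroupOf.mpr ⟨ρ, rfl⟩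
    rw [mem_stabilizer_iff, mul_smul]
    exact hfix hρ
  have hodd : signProd n ((w : WB n)⁻¹ * signFlip k) = -1 := by
    rw [map_mul, map_inv, w.2, signProd_signFlip, inv_one, one_mul]
  exact absurd (heven.symm.trans hodd) (by decide)

theorem stabilizer_order_and_nonconjugacy_Dn (n : ℕ) (hn : 0 < n) (hne : Even n)
    (θ : AddCircle (1 : ℝ))
    (h0 : θ ≠ 0) (hhalf : θ ≠ ((1 / 2 : ℝ) : AddCircle (1 : ℝ)))
    (hq : θ ≠ ((1 / 4 : ℝ) : AddCircle (1 : ℝ)))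
    (h3q : θ ≠ ((3 / 4 : ℝ) : AddCircle (1 : ℝ)))
    (t : Fin n → AddCircle (1 : ℝ))
    (ht : t = fun i : Fin n => if (i : ℕ) = n - 1 then -θ else θ) :
    Nat.card (MulAction.stabilizer (WD n) t) = n.factorial ∧
    ∀ g : ConjAct (WD n), g • SnInWD n ≠ MulAction.stabilizer (WD n) t :=
  stabilizer_order_and_nonconjugacy_Dn_general n hn hne θ h0 hhalf t ht
end

section
/- The genus number of the compact simply connected simple Lie group of type G_2 (the number of conjugacy classes of stabilizers of torus elements in its Weyl group) is 6. -/
/-!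
STATEMENT 13: The genus number of the compact simply connected simple Lie group of
type `G₂` — the number of conjugacy classes of stabilizers of maximal-torus elements
in its Weyl group — is `6`.

The Weyl group of `G₂` is `S₃ ⋊ S₂` (dihedral of order 12; since the `S₂`-factor,
inversion, commutes with the permutations, it is `S₃ × S₂`, realized here as
`Equiv.Perm (Fin 3) × ℤˣ`).  It acts on the maximal torus
`T = {(z₁,z₂,z₃) ∈ (S¹)³ : z₁z₂z₃ = 1}` — written additively as
`{t ∈ (ℝ/ℤ)³ : t₁ + t₂ + t₃ = 0}` — with `S₃` permuting the coordinates and the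
nontrivial element of `S₂` acting by (complex-conjugation) inversion.
-/

open Pointwise

/-- The maximal torus of `G₂`: triples in `(ℝ/ℤ)³ ≅ (S¹)³` summing to `0`
(multiplicatively: with product `1`). -/
def G2Torus : Type := {t : Fin 3 → AddCircle (1 : ℝ) // ∑ i, t i = 0}

/-- The Weyl group `S₃ ⋊ S₂ ≅ S₃ × S₂` of `G₂` acting on the torus: permutations of
the three coordinates, and global inversion. -/
noncomputable instance weylG2Action : MulAction (Equiv.Perm (Fin 3) × ℤˣ) G2Torus where
  smul w t := ⟨fun i => ((w.2 : ℤ)) • t.1 (w.1⁻¹ i), by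
    rw [← Finset.smul_sum, Equiv.sum_comp (w.1⁻¹ : Equiv.Perm (Fin 3)) t.1, t.2,
      smul_zero]⟩
  one_smul t := by
    apply Subtype.ext
    funext i
    show (((1 : Equiv.Perm (Fin 3) × ℤˣ).2 : ℤ))
        • t.1 ((1 : Equiv.Perm (Fin 3) × ℤˣ).1⁻¹ i) = t.1 i
    simp
  mul_smul w w' t := by
    apply Subtype.ext
    funext i
    show (((w * w').2 : ℤ)) • t.1 ((w * w').1⁻¹ i)
      = ((w.2 : ℤ)) • ((w'.2 : ℤ)) • t.1 (w'.1⁻¹ (w.1⁻¹ i))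
    simp [mul_inv_rev, Units.val_mul, mul_smul]

/-!
The stabilizer of a torus point is read off from the coincidences among its coordinates.
After permuting coordinates, either `t₀ = t₁`, and then the stabilizer splits as `K × E`,
where `K ∈ {⟨(0 1)⟩, S₃}` is the group of permutations fixing `t` and `E = {±1}` or `1`
according as `-t = t` or not; or the coordinates are pairwise distinct, no permutation other
than `1` fixes `t`, and the stabilizer is `⟨((0 1), -1)⟩` when a coordinate vanishes (moved to
the last place) and trivial otherwise. Indeed a permutation `σ ≠ 1` with `t ∘ σ = -t` forces
a zero coordinate through `t₀ + t₁ + t₂ = 0`, while `σ = 1` would give two distinct elements of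
order `2` in `ℝ/ℤ`. All six subgroups occur at points of `(ℤ/6)³ ⊆ (ℝ/ℤ)³`, and no two of them
are conjugate since they differ in their orders or in their images in `{±1}`.
-/

open Equiv Function Subgroup MulAction

section GroupTheory

variable {G : Type*} [Group G]

theorem MulAction.orbitRel_conjAct_stabilizer_smul {α : Type*} [MulAction G α] (g : G) (a : α) :
    orbitRel (ConjAct G) (Subgroup G) (stabilizer G (g • a)) (stabilizer G a) := by
  refine ⟨ConjAct.toConjAct g, ?_⟩
  show ConjAct.toConjAct g • stabilizer G a = stabilizer G (g • a)
  rw [stabilizer_smul_eq_stabilizer_map_conj, pointwise_smul_def]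
  rfl

namespace Subgroup

theorem card_eq_of_orbitRel_conjAct {H K : Subgroup G}
    (h : orbitRel (ConjAct G) (Subgroup G) H K) : Nat.card H = Nat.card K := by
  obtain ⟨g, rfl⟩ := h
  exact (Nat.card_congr (equivSMul g K).toEquiv).symm

theorem map_eq_of_orbitRel_conjAct {A : Type*} [CommGroup A] (f : G →* A) {H K : Subgroup G}
    (h : orbitRel (ConjAct G) (Subgroup G) H K) : H.map f = K.map f := by
  obtain ⟨g, rfl⟩ := h
  have hf : ∀ (g : ConjAct G) y, f (g • y) = f y := fun g y => by
    simp [ConjAct.smul_def, mul_comm]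
  ext a
  constructor
  · rintro ⟨y, hy, rfl⟩
    rw [SetLike.mem_coe, mem_pointwise_smul_iff_inv_smul_mem] at hy
    exact ⟨_, hy, hf _ _⟩
  · rintro ⟨y, hy, rfl⟩
    exact ⟨g • y, smul_mem_pointwise_smul _ _ _ hy, hf _ _⟩

theorem mem_zpowers_iff_of_orderOf_eq_two {g x : G} (hg : orderOf g = 2) :
    x ∈ zpowers g ↔ x = 1 ∨ x = g := by
  refine ⟨fun ⟨k, hk⟩ => ?_, ?_⟩
  · rw [← hk]
    show g ^ k = 1 ∨ g ^ k = g
    rw [← zpow_mod_orderOf, hg]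
    rcases Int.emod_two_eq_zero_or_one k with h | h <;> simp [h]
  · rintro (rfl | rfl)
    exacts [one_mem _, mem_zpowers _]

variable {K : Type*} [Group K]

theorem card_prod (H : Subgroup G) (E : Subgroup K) :
    Nat.card (H.prod E) = Nat.card H * Nat.card E := by
  rw [Nat.card_congr (prodEquiv H E).toEquiv, Nat.card_prod]

theorem map_snd_prod (H : Subgroup G) (E : Subgroup K) :
    (H.prod E).map (MonoidHom.snd G K) = E := by
  ext k
  simp only [mem_map, mem_prod, MonoidHom.coe_snd]
  exact ⟨fun ⟨p, ⟨_, hp⟩, hk⟩ => hk ▸ hp, fun hk => ⟨(1, k), ⟨one_mem H, hk⟩, rfl⟩⟩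

theorem eq_prod_comap_inl_comap_inr (H : Subgroup (G × K)) (h : ∀ p ∈ H, (p.1, 1) ∈ H) :
    H = (H.comap (MonoidHom.inl G K)).prod (H.comap (MonoidHom.inr G K)) := by
  ext ⟨g, k⟩
  simp only [mem_prod, mem_comap, MonoidHom.inl_apply, MonoidHom.inr_apply]
  refine ⟨fun hp => ⟨h _ hp, ?_⟩, fun ⟨hg, hk⟩ => by simpa using mul_mem hg hk⟩
  simpa using mul_mem (inv_mem (h _ hp)) hp

end Subgroup

end GroupTheory

theorem AddCircle.eq_of_neg_eq_self {𝕜 : Type*} [Field 𝕜] [LinearOrder 𝕜]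
    [IsStrictOrderedRing 𝕜] {p : 𝕜} [Fact (0 < p)] {a b : AddCircle p} (ha : -a = a)
    (hb : -b = b) (ha0 : a ≠ 0) (hb0 : b ≠ 0) : a = b := by
  have horder : ∀ c : AddCircle p, -c = c → c ≠ 0 → addOrderOf c = 2 := fun c hc hc0 =>
    addOrderOf_eq_prime (by rw [two_nsmul]; nth_rw 1 [← hc]; exact neg_add_cancel c) hc0
  have : Subsingleton {u : AddCircle p // addOrderOf u = 2} :=
    (Nat.card_eq_one_iff_unique.mp (by rw [card_addOrderOf_eq_totient, Nat.totient_two])).1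
  exact congrArg Subtype.val
    (Subsingleton.elim (⟨a, horder a ha ha0⟩ : {u // addOrderOf u = 2}) ⟨b, horder b hb hb0⟩)

theorem Fin.exists_univ_eq_insert_pair {i j : Fin 3} (h : i ≠ j) :
    ∃ k, k ∉ ({i, j} : Finset (Fin 3)) ∧ Finset.univ = insert k {i, j} := by
  revert i j; decide

theorem Equiv.Perm.exists_apply_zero_apply_one {i j : Fin 3} (h : i ≠ j) :
    ∃ π : Perm (Fin 3), π 0 = i ∧ π 1 = j := by
  revert i j; decide

theorem Equiv.Perm.eq_one_or_eq_swap_of_apply_two (σ : Perm (Fin 3)) (h : σ 2 = 2) :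
    σ = 1 ∨ σ = swap 0 1 := by
  revert σ; decide

section Triples

variable {A : Type*} [AddCommGroup A] {x : Fin 3 → A} {τ : Perm (Fin 3)}

theorem neg_eq_self_of_comp_perm_eq_neg (hx : ∑ i, x i = 0) (h01 : x 0 = x 1)
    (h : x ∘ τ = -x) : -x = x := by
  have hx0 : ∀ j, j ≠ 2 → x j = x 0 := by
    intro j hj
    fin_cases j <;> simp_all
  obtain ⟨i, hi, hτi⟩ : ∃ i, i ≠ 2 ∧ τ i ≠ 2 := by
    by_contra! hτ
    exact absurd (τ.injective ((hτ 0 (by decide)).trans (hτ 1 (by decide)).symm)) (by decide)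
  have h0 : -x 0 = x 0 :=
    calc -x 0 = -x i := by rw [hx0 i hi]
      _ = x (τ i) := (congrFun h i).symm
      _ = x 0 := hx0 _ hτi
  have h2 : x 2 = 0 := by
    rw [Fin.sum_univ_three, ← h01] at hx
    nth_rw 1 [← h0] at hx
    rwa [neg_add_cancel, zero_add] at hx
  funext j
  fin_cases j
  · exact h0
  · simpa [← h01] using h0
  · simp [h2]

theorem exists_apply_eq_zero_of_comp_perm_eq_neg (hx : ∑ i, x i = 0) (hτ : τ ≠ 1)
    (h : x ∘ τ = -x) : ∃ k, x k = 0 := by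
  obtain ⟨i, hi⟩ : ∃ i, τ i ≠ i := by
    by_contra! hτi
    exact hτ (Equiv.ext hτi)
  obtain ⟨k, hk, huniv⟩ := Fin.exists_univ_eq_insert_pair hi.symm
  have hτi : x (τ i) = -x i := congrFun h i
  rw [huniv, Finset.sum_insert hk, Finset.sum_pair hi.symm, hτi, add_neg_cancel, add_zero] at hx
  exact ⟨k, hx⟩

end Triples

abbrev WeylG2 : Type := Perm (Fin 3) × ℤˣ

theorem orderOf_swap_zero_one : orderOf (swap (0 : Fin 3) 1) = 2 :=
  orderOf_eq_prime (by decide) (by decide)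

theorem orderOf_swap_zero_one_neg_one : orderOf ((swap 0 1, -1) : WeylG2) = 2 :=
  orderOf_eq_prime (by decide) (by decide)

namespace G2Torus

variable {t : G2Torus} {σ : Perm (Fin 3)}

theorem sum_eq_zero (t : G2Torus) : ∑ i, t.1 i = 0 := t.2

theorem mk_inv_one_smul_val (π : Perm (Fin 3)) (t : G2Torus) :
    ((π⁻¹, (1 : ℤˣ)) • t : G2Torus).1 = t.1 ∘ ⇑π := by
  show (1 : ℤ) • (t.1 ∘ ⇑π⁻¹⁻¹) = _
  rw [one_smul, inv_inv]

theorem mk_mem_stabilizer_iff {ε : ℤˣ} :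
    (σ, ε) ∈ stabilizer WeylG2 t ↔ (ε : ℤ) • (t.1 ∘ ⇑σ⁻¹) = t.1 := by
  rw [mem_stabilizer_iff]
  exact ⟨congrArg Subtype.val, fun h => Subtype.ext h⟩

theorem mk_one_mem_stabilizer_iff : (σ, 1) ∈ stabilizer WeylG2 t ↔ t.1 ∘ ⇑σ⁻¹ = t.1 := by
  rw [mk_mem_stabilizer_iff, Units.val_one, one_smul]

theorem mk_neg_one_mem_stabilizer_iff :
    (σ, -1) ∈ stabilizer WeylG2 t ↔ t.1 ∘ ⇑σ⁻¹ = -t.1 := by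
  rw [mk_mem_stabilizer_iff, Units.val_neg, Units.val_one, neg_smul, one_smul, neg_eq_iff_eq_neg]

theorem mk_one_mem_stabilizer_iff_of_injective (ht : Injective t.1) :
    (σ, 1) ∈ stabilizer WeylG2 t ↔ σ = 1 := by
  rw [mk_one_mem_stabilizer_iff, ← inv_eq_one]
  exact (ht.comp_left.eq_iff (b := ⇑(1 : Perm (Fin 3)))).trans DFunLike.coe_fn_eq

theorem stabilizer_eq_prod (h01 : t.1 0 = t.1 1) :
    stabilizer WeylG2 t = ((stabilizer WeylG2 t).comap (MonoidHom.inl _ _)).prod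
      ((stabilizer WeylG2 t).comap (MonoidHom.inr _ _)) := by
  refine eq_prod_comap_inl_comap_inr _ fun ⟨σ, ε⟩ h => ?_
  rcases Int.units_eq_one_or ε with rfl | rfl
  · exact h
  rw [mk_neg_one_mem_stabilizer_iff] at h
  rw [mk_one_mem_stabilizer_iff, h]
  exact neg_eq_self_of_comp_perm_eq_neg t.sum_eq_zero h01 h

theorem comap_inl_stabilizer_eq_top (h : ∀ i, t.1 i = t.1 0) :
    (stabilizer WeylG2 t).comap (MonoidHom.inl _ _) = ⊤ := by
  refine eq_top_iff.mpr fun σ _ => ?_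
  rw [mem_comap, MonoidHom.inl_apply, mk_one_mem_stabilizer_iff]
  funext i
  simp [h]

theorem comap_inl_stabilizer_eq_zpowers (h01 : t.1 0 = t.1 1) (h2 : t.1 2 ≠ t.1 0) :
    (stabilizer WeylG2 t).comap (MonoidHom.inl _ _) = zpowers (swap 0 1) := by
  ext σ
  rw [mem_comap, MonoidHom.inl_apply, mk_one_mem_stabilizer_iff,
    mem_zpowers_iff_of_orderOf_eq_two orderOf_swap_zero_one]
  constructor
  · intro h
    have hσ2 : σ⁻¹ 2 = 2 := by
      by_contra hne
      have : t.1 (σ⁻¹ 2) = t.1 0 := by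
        generalize σ⁻¹ 2 = j at hne
        fin_cases j <;> simp_all
      exact h2 ((congrFun h 2).symm.trans this)
    exact Perm.eq_one_or_eq_swap_of_apply_two σ (Perm.inv_eq_iff_eq.mp hσ2).symm
  · rintro (rfl | rfl)
    · rfl
    · funext i
      fin_cases i <;> simp [h01, swap_apply_of_ne_of_ne]

theorem comap_inr_stabilizer_eq_top (h : -t.1 = t.1) :
    (stabilizer WeylG2 t).comap (MonoidHom.inr _ _) = ⊤ := by
  refine eq_top_iff.mpr fun ε _ => ?_
  rw [mem_comap, MonoidHom.inr_apply]
  rcases Int.units_eq_one_or ε with rfl | rfl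
  · exact one_mem _
  · rw [mk_neg_one_mem_stabilizer_iff, h]
    rfl

theorem comap_inr_stabilizer_eq_bot (h : -t.1 ≠ t.1) :
    (stabilizer WeylG2 t).comap (MonoidHom.inr _ _) = ⊥ := by
  refine eq_bot_iff.mpr fun ε hε => ?_
  rw [mem_comap, MonoidHom.inr_apply] at hε
  rcases Int.units_eq_one_or ε with rfl | rfl
  · exact one_mem _
  · rw [mk_neg_one_mem_stabilizer_iff] at hε
    exact absurd hε.symm h

theorem stabilizer_eq_zpowers (ht : Injective t.1) (h2 : t.1 2 = 0) :
    stabilizer WeylG2 t = zpowers (swap 0 1, -1) := by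
  have hneg : -t.1 = t.1 ∘ ⇑(swap 0 1 : Perm (Fin 3)) := by
    have hsum := t.sum_eq_zero
    rw [Fin.sum_univ_three, h2, add_zero, add_eq_zero_iff_eq_neg] at hsum
    funext i
    fin_cases i <;> simp [hsum, h2, swap_apply_of_ne_of_ne]
  ext ⟨σ, ε⟩
  rw [mem_zpowers_iff_of_orderOf_eq_two orderOf_swap_zero_one_neg_one]
  rcases Int.units_eq_one_or ε with rfl | rfl
  · rw [mk_one_mem_stabilizer_iff_of_injective ht]
    simp [Prod.ext_iff]
  · rw [mk_neg_one_mem_stabilizer_iff, hneg, ht.comp_left.eq_iff, DFunLike.coe_fn_eq,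
      inv_eq_iff_eq_inv, swap_inv]
    simp [Prod.ext_iff]

theorem stabilizer_eq_bot (ht : Injective t.1) (h0 : ∀ i, t.1 i ≠ 0) :
    stabilizer WeylG2 t = ⊥ := by
  ext ⟨σ, ε⟩
  rw [mem_bot]
  rcases Int.units_eq_one_or ε with rfl | rfl
  · rw [mk_one_mem_stabilizer_iff_of_injective ht]
    simp [Prod.ext_iff]
  · refine iff_of_false (fun h => ?_) fun h => absurd (congrArg Prod.snd h) (by simp)
    rw [mk_neg_one_mem_stabilizer_iff] at h
    have hσ : σ⁻¹ = 1 := by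
      by_contra hσ
      obtain ⟨k, hk⟩ := exists_apply_eq_zero_of_comp_perm_eq_neg t.sum_eq_zero hσ h
      exact h0 k hk
    rw [hσ] at h
    have hneg : ∀ i, -t.1 i = t.1 i := fun i => (congrFun h i).symm
    exact absurd (ht (AddCircle.eq_of_neg_eq_self (hneg 0) (hneg 1) (h0 0) (h0 1))) (by decide)

theorem exists_smul_normal_form (t : G2Torus) : ∃ w : WeylG2,
    (w • t).1 0 = (w • t).1 1 ∨
      Injective (w • t).1 ∧ ((w • t).1 2 = 0 ∨ ∀ i, (w • t).1 i ≠ 0) := by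
  by_cases ht : Injective t.1
  · by_cases h0 : ∃ k, t.1 k = 0
    · obtain ⟨k, hk⟩ := h0
      refine ⟨((swap k 2)⁻¹, 1), Or.inr ?_⟩
      rw [mk_inv_one_smul_val]
      exact ⟨ht.comp (swap k 2).injective, Or.inl (by simp [hk])⟩
    · simp only [not_exists] at h0
      exact ⟨1, by rw [one_smul]; exact Or.inr ⟨ht, Or.inr h0⟩⟩
  · obtain ⟨i, j, hij, hne⟩ : ∃ i j, t.1 i = t.1 j ∧ i ≠ j := by
      simpa [Injective] using ht
    obtain ⟨π, hπ0, hπ1⟩ := Perm.exists_apply_zero_apply_one hne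
    exact ⟨(π⁻¹, 1), Or.inl (by simp [mk_inv_one_smul_val, hπ0, hπ1, hij])⟩

/-- Coincidences among the coordinates of these points reduce to decidable ones in `ZMod N`. -/
noncomputable def ofZMod {N : ℕ} [NeZero N] (v : Fin 3 → ZMod N) (hv : ∑ i, v i = 0) :
    G2Torus :=
  ⟨ZMod.toAddCircle ∘ v, by
    show ∑ i, ZMod.toAddCircle (v i) = 0
    rw [← map_sum, hv, map_zero]⟩

section ofZMod

variable {N : ℕ} [NeZero N] {v : Fin 3 → ZMod N} {hv : ∑ i, v i = 0}

theorem ofZMod_apply_eq_iff {i j : Fin 3} :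
    (ofZMod v hv).1 i = (ofZMod v hv).1 j ↔ v i = v j :=
  ZMod.toAddCircle_inj

theorem ofZMod_apply_eq_zero_iff {i : Fin 3} : (ofZMod v hv).1 i = 0 ↔ v i = 0 :=
  ZMod.toAddCircle_eq_zero

theorem injective_ofZMod_iff : Injective (ofZMod v hv).1 ↔ Injective v :=
  (ZMod.toAddCircle_injective N).of_comp_iff v

theorem neg_ofZMod_eq_iff : -(ofZMod v hv).1 = (ofZMod v hv).1 ↔ -v = v := by
  have hneg : -(ofZMod v hv).1 = ZMod.toAddCircle ∘ (-v) := by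
    funext i
    simp [ofZMod]
  rw [hneg, ← (ZMod.toAddCircle_injective N).comp_left.eq_iff]
  rfl

end ofZMod

end G2Torus

open G2Torus

def stabilizerType : Fin 6 → Subgroup WeylG2 :=
  ![⊥, zpowers (swap 0 1, -1), (zpowers (swap 0 1)).prod ⊥, (zpowers (swap 0 1)).prod ⊤,
    (⊤ : Subgroup (Perm (Fin 3))).prod ⊥, (⊤ : Subgroup (Perm (Fin 3))).prod ⊤]

theorem G2Torus.exists_stabilizer_smul_eq_stabilizerType (t : G2Torus) :
    ∃ (w : WeylG2) (i : Fin 6), stabilizer WeylG2 (w • t) = stabilizerType i := by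
  obtain ⟨w, h⟩ := exists_smul_normal_form t
  refine ⟨w, ?_⟩
  generalize w • t = s at h
  rcases h with h01 | ⟨hs, h2 | h0⟩
  · have hK : (stabilizer WeylG2 s).comap (MonoidHom.inl _ _) = zpowers (swap 0 1) ∨
        (stabilizer WeylG2 s).comap (MonoidHom.inl _ _) = ⊤ := by
      by_cases h2 : s.1 2 = s.1 0
      · refine Or.inr (comap_inl_stabilizer_eq_top fun i => ?_)
        fin_cases i
        exacts [rfl, h01.symm, h2]
      · exact Or.inl (comap_inl_stabilizer_eq_zpowers h01 h2)
    have hE : (stabilizer WeylG2 s).comap (MonoidHom.inr _ _) = ⊥ ∨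
        (stabilizer WeylG2 s).comap (MonoidHom.inr _ _) = ⊤ := by
      by_cases hneg : -s.1 = s.1
      exacts [Or.inr (comap_inr_stabilizer_eq_top hneg), Or.inl (comap_inr_stabilizer_eq_bot hneg)]
    rw [stabilizer_eq_prod h01]
    rcases hK with hK | hK <;> rcases hE with hE | hE <;> rw [hK, hE]
    exacts [⟨2, rfl⟩, ⟨3, rfl⟩, ⟨4, rfl⟩, ⟨5, rfl⟩]
  · exact ⟨1, stabilizer_eq_zpowers hs h2⟩
  · exact ⟨0, stabilizer_eq_bot hs h0⟩

theorem G2Torus.exists_stabilizer_eq_stabilizerType (i : Fin 6) :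
    ∃ t : G2Torus, stabilizer WeylG2 t = stabilizerType i := by
  fin_cases i
  · refine ⟨ofZMod (N := 6) ![1, 2, 3] (by decide), stabilizer_eq_bot
      (injective_ofZMod_iff.mpr (by decide)) fun i => ofZMod_apply_eq_zero_iff.not.mpr ?_⟩
    revert i; decide
  · exact ⟨ofZMod (N := 6) ![2, 4, 0] (by decide), stabilizer_eq_zpowers
      (injective_ofZMod_iff.mpr (by decide)) (ofZMod_apply_eq_zero_iff.mpr rfl)⟩
  · refine ⟨ofZMod (N := 6) ![1, 1, 4] (by decide), ?_⟩
    rw [stabilizer_eq_prod rfl, comap_inl_stabilizer_eq_zpowers rfl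
      (ofZMod_apply_eq_iff.not.mpr (by decide)),
      comap_inr_stabilizer_eq_bot (neg_ofZMod_eq_iff.not.mpr (by decide))]
    rfl
  · refine ⟨ofZMod (N := 6) ![3, 3, 0] (by decide), ?_⟩
    rw [stabilizer_eq_prod rfl, comap_inl_stabilizer_eq_zpowers rfl
      (ofZMod_apply_eq_iff.not.mpr (by decide)),
      comap_inr_stabilizer_eq_top (neg_ofZMod_eq_iff.mpr (by decide))]
    rfl
  · refine ⟨ofZMod (N := 6) ![2, 2, 2] (by decide), ?_⟩
    rw [stabilizer_eq_prod rfl, comap_inl_stabilizer_eq_top fun i =>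
      ofZMod_apply_eq_iff.mpr (by fin_cases i <;> rfl),
      comap_inr_stabilizer_eq_bot (neg_ofZMod_eq_iff.not.mpr (by decide))]
    rfl
  · refine ⟨ofZMod (N := 6) 0 (by decide), ?_⟩
    rw [stabilizer_eq_prod rfl, comap_inl_stabilizer_eq_top fun i => ofZMod_apply_eq_iff.mpr rfl,
      comap_inr_stabilizer_eq_top (neg_ofZMod_eq_iff.mpr (by decide))]
    rfl

theorem card_stabilizerType (i : Fin 6) :
    (Nat.card (stabilizerType i), Nat.card ((stabilizerType i).map (MonoidHom.snd _ _))) =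
      ![(1, 1), (2, 2), (2, 1), (4, 2), (6, 1), (12, 2)] i := by
  have h6 : Nat.card (Perm (Fin 3)) = 6 := by
    simp [Nat.card_eq_fintype_card, Fintype.card_perm, Nat.factorial]
  have h2 : Nat.card ℤˣ = 2 := by simp [Nat.card_eq_fintype_card]
  have hneg : orderOf (-1 : ℤˣ) = 2 := orderOf_eq_prime (by decide) (by decide)
  fin_cases i <;> simp [stabilizerType, card_prod, map_snd_prod, Nat.card_zpowers,
    MonoidHom.map_zpowers, orderOf_swap_zero_one, orderOf_swap_zero_one_neg_one, hneg, h6, h2,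
    -Nat.card_eq_fintype_card]

theorem injective_mk_stabilizerType :
    Injective fun i =>
      Quotient.mk (orbitRel (ConjAct WeylG2) (Subgroup WeylG2)) (stabilizerType i) := by
  intro i j h
  have hrel := Quotient.exact h
  apply (by decide : Injective ![((1 : ℕ), (1 : ℕ)), (2, 2), (2, 1), (4, 2), (6, 1), (12, 2)])
  rw [← card_stabilizerType, ← card_stabilizerType, card_eq_of_orbitRel_conjAct hrel,
    map_eq_of_orbitRel_conjAct _ hrel]

theorem genus_number_G2 :
    Nat.card {C : Quotient (MulAction.orbitRel (ConjAct (Equiv.Perm (Fin 3) × ℤˣ))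
        (Subgroup (Equiv.Perm (Fin 3) × ℤˣ))) //
      ∃ t : G2Torus,
        C = Quotient.mk (MulAction.orbitRel (ConjAct (Equiv.Perm (Fin 3) × ℤˣ))
              (Subgroup (Equiv.Perm (Fin 3) × ℤˣ)))
            (MulAction.stabilizer (Equiv.Perm (Fin 3) × ℤˣ) t)} = 6 := by
  have hrange : ∀ C, (∃ t : G2Torus, C = Quotient.mk _ (stabilizer WeylG2 t)) ↔
      C ∈ Set.range fun i =>
        Quotient.mk (orbitRel (ConjAct WeylG2) (Subgroup WeylG2)) (stabilizerType i) := by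
    intro C
    constructor
    · rintro ⟨t, rfl⟩
      obtain ⟨w, i, hi⟩ := t.exists_stabilizer_smul_eq_stabilizerType
      refine ⟨i, ?_⟩
      dsimp only
      rw [← hi]
      exact Quotient.sound (orbitRel_conjAct_stabilizer_smul w t)
    · rintro ⟨i, rfl⟩
      obtain ⟨t, ht⟩ := exists_stabilizer_eq_stabilizerType i
      exact ⟨t, by rw [ht]⟩
  rw [Nat.card_congr (Equiv.subtypeEquivRight hrange),
    Nat.card_range_of_injective injective_mk_stabilizerType, Nat.card_fin]
end
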